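/- Suppose ω is a differential form with a center at 0 over an algebraically closed field of characteristic 0, and the associated quadric F₂(ω,0) has rank 2. Then there exists an invertible linear change of coordinates g such that g(ω) = x dx + y dy + higher order terms, i.e., g(ω) is a Poincaré differential form. -/

import Mathlib

/-!
The linear part of `ω = P dx + Q dy` at the centre is `μ(0)⁻¹` times the Hessian of the first
integral `F`, hence a nondegenerate symmetric matrix. A linear substitution `M` transforms this
linear part by congruence, `J ↦ Mᵀ J M`, and over an algebraically closed field of characteristic
`≠ 2` every nondegenerate symmetric matrix is congruent to the identity: take an orthogonal basis
of the associated bilinear form and rescale each vector by a square root.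
-/

open MvPolynomial

open Matrix LinearMap in
theorem Matrix.exists_transpose_mul_mul_eq_one {K n : Type*} [Field K] [IsAlgClosed K]
    [NeZero (2 : K)] [Fintype n] [DecidableEq n] {S : Matrix n n K} (hS : S.IsSymm)
    (hdet : S.det ≠ 0) : ∃ M : Matrix n n K, IsUnit M.det ∧ Mᵀ * S * M = 1 := by
  have : Invertible (2 : K) := invertibleOfNonzero two_ne_zero
  obtain ⟨v, hv⟩ := BilinForm.exists_orthogonal_basis
    (BilinForm.isSymm_iff.1 (Matrix.isSymm_toBilin'_iff_isSymm.2 hS))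
  have hv0 := BilinForm.iIsOrtho.not_isOrtho_basis_self_of_nondegenerate hv
    (BilinForm.nondegenerate_toBilin'_of_det_ne_zero' S hdet)
  have e : n ≃ Fin (Module.finrank K (n → K)) := (Pi.basisFun K n).indexEquiv v
  choose c hc using fun i =>
    IsAlgClosed.exists_pow_nat_eq (toBilin' S (v (e i)) (v (e i)))⁻¹ two_pos
  set M : Matrix n n K := of fun a i => c i * v (e i) a
  have hM : Mᵀ * S * M = 1 := by
    ext i j
    have hentry : (Mᵀ * S * M) i j = c i * c j * toBilin' S (v (e i)) (v (e j)) := by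
      simp only [M, toBilin'_apply, mul_apply, transpose_apply, of_apply, Finset.sum_mul,
        Finset.mul_sum]
      rw [Finset.sum_comm]
      exact Finset.sum_congr rfl fun a _ => Finset.sum_congr rfl fun b _ => by ring
    rw [hentry]
    rcases eq_or_ne i j with rfl | hij
    · rw [← sq, hc, inv_mul_cancel₀ (hv0 _), one_apply_eq]
    · rw [hv (e.injective.ne hij), mul_zero, one_apply_ne hij]
  have hdetM : M.det * S.det * M.det = 1 := by
    simpa only [det_mul, det_transpose, det_one] using congrArg det hM
  exact ⟨M, IsUnit.of_mul_eq_one_right _ hdetM, hM⟩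

namespace MvPolynomial

open Matrix

variable {R σ τ : Type*} [CommRing R]

theorem pderiv_pderiv_comm (i j : σ) (p : MvPolynomial σ R) :
    pderiv i (pderiv j p) = pderiv j (pderiv i p) := by
  have : ⁅pderiv i, pderiv j⁆ = (0 : Derivation R (MvPolynomial σ R) (MvPolynomial σ R)) :=
    derivation_ext fun k => by
      rw [Derivation.commutator_apply]
      classical simp [pderiv_X, Pi.single_apply, apply_ite]
  rw [← sub_eq_zero, ← Derivation.commutator_apply, this, Derivation.zero_apply]

theorem eval_zero_pderiv (i : σ) (p : MvPolynomial σ R) :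
    eval 0 (pderiv i p) = coeff (Finsupp.single i 1) p := by
  classical simp [eval_zero, constantCoeff_eq, coeff_pderiv]

theorem eval_aeval (x : τ → R) (g : σ → MvPolynomial τ R) (p : MvPolynomial σ R) :
    eval x (aeval g p) = eval (fun i => eval x (g i)) p := by
  rw [aeval_eq_bind₁]
  exact eval₂Hom_bind₁ _ _ _ _

theorem pderiv_aeval [Fintype σ] (k : τ) (g : σ → MvPolynomial τ R) (p : MvPolynomial σ R) :
    pderiv k (aeval g p) = ∑ i, aeval g (pderiv i p) * pderiv k (g i) := by
  classical
  induction p using MvPolynomial.induction_on with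
  | C a => simp only [aeval_C, algebraMap_eq, pderiv_C, map_zero, zero_mul, Finset.sum_const_zero]
  | add p q hp hq => simp only [map_add, hp, hq, add_mul, Finset.sum_add_distrib]
  | mul_X p n ih =>
    simp only [map_mul, map_add, pderiv_mul, ih, aeval_X, pderiv_X, add_mul,
      Finset.sum_add_distrib, Finset.sum_mul, Pi.single_apply, mul_ite, mul_one, mul_zero]
    simp [apply_ite, mul_right_comm]

theorem homogeneousComponent_one_eq_sum [Fintype σ] (p : MvPolynomial σ R) :
    homogeneousComponent 1 p = ∑ i, C (eval 0 (pderiv i p)) * X i := by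
  classical
  ext d
  simp only [coeff_homogeneousComponent, coeff_sum, coeff_C_mul, coeff_X, eval_zero_pderiv,
    mul_ite, mul_one, mul_zero]
  split_ifs with hd
  · obtain ⟨a, rfl⟩ : d ∈ Set.range fun a => Finsupp.single a 1 := Finsupp.range_single_one ▸ hd
    simp [Finsupp.single_left_inj]
  · exact (Finset.sum_eq_zero fun i _ =>
      if_neg fun h : Finsupp.single i 1 = d => hd (h ▸ Finsupp.degree_single i 1)).symm

noncomputable def jacobianAtZero (ω : σ → MvPolynomial σ R) : Matrix σ σ R :=
  of fun j i => eval 0 (pderiv i (ω j))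

def IsPoincareForm (ω : σ → MvPolynomial σ R) : Prop :=
  ∀ l, homogeneousComponent 0 (ω l) = 0 ∧ homogeneousComponent 1 (ω l) = X l

theorem jacobianAtZero_mul {ω : σ → MvPolynomial σ R} (hω : ∀ j, eval 0 (ω j) = 0)
    (f : MvPolynomial σ R) :
    jacobianAtZero (fun j => f * ω j) = eval 0 f • jacobianAtZero ω := by
  ext j i
  simp only [jacobianAtZero, of_apply, Matrix.smul_apply, smul_eq_mul, pderiv_mul, map_add,
    map_mul, hω, mul_zero, zero_add]

theorem isSymm_jacobianAtZero_pderiv (F : MvPolynomial σ R) :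
    (jacobianAtZero fun j => pderiv j F).IsSymm :=
  IsSymm.ext fun i j => by simp [jacobianAtZero, pderiv_pderiv_comm]

theorem isPoincareForm_of_jacobianAtZero_eq_one [Fintype σ] [DecidableEq σ]
    {ω : σ → MvPolynomial σ R} (h0 : ∀ l, eval 0 (ω l) = 0) (h1 : jacobianAtZero ω = 1) :
    IsPoincareForm ω := by
  intro l
  refine ⟨by rw [homogeneousComponent_zero, ← constantCoeff_eq, ← eval_zero, h0, map_zero], ?_⟩
  have hlin (i : σ) : eval 0 (pderiv i (ω l)) = (1 : Matrix σ σ R) l i :=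
    congrFun (congrFun h1 l) i
  simp only [homogeneousComponent_one_eq_sum, hlin, one_apply, apply_ite C, map_one, map_zero,
    ite_mul, one_mul, zero_mul, Finset.sum_ite_eq, Finset.mem_univ, if_true]

section LinearSubst

variable [Fintype σ]

noncomputable def linearSubst (M : Matrix σ σ R) : MvPolynomial σ R →ₐ[R] MvPolynomial σ R :=
  aeval fun i => ∑ j, C (M i j) * X j

/-- The pullback `∑ₗ (∑ⱼ M j l · ωⱼ(Mx)) dxₗ` of the one-form `∑ⱼ ωⱼ dxⱼ` along `x ↦ Mx`. -/
noncomputable def pullbackForm (M : Matrix σ σ R) (ω : σ → MvPolynomial σ R) :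
    σ → MvPolynomial σ R :=
  fun l => ∑ j, C (M j l) * linearSubst M (ω j)

theorem eval_linearSubst (M : Matrix σ σ R) (x : σ → R) (p : MvPolynomial σ R) :
    eval x (linearSubst M p) = eval (M *ᵥ x) p := by
  have : (fun i => eval x (∑ j, C (M i j) * X j)) = M *ᵥ x := by
    ext i
    simp [mulVec, dotProduct]
  rw [linearSubst, eval_aeval, this]

theorem pderiv_linearSubst (M : Matrix σ σ R) (k : σ) (p : MvPolynomial σ R) :
    pderiv k (linearSubst M p) = ∑ i, linearSubst M (pderiv i p) * C (M i k) := by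
  classical
  rw [linearSubst, pderiv_aeval]
  refine Finset.sum_congr rfl fun i _ => congrArg _ ?_
  simp [pderiv_X, Pi.single_apply]

theorem eval_zero_pullbackForm (M : Matrix σ σ R) (ω : σ → MvPolynomial σ R) (l : σ) :
    eval 0 (pullbackForm M ω l) = ∑ j, M j l * eval 0 (ω j) := by
  simp only [pullbackForm, map_sum, map_mul, eval_C, eval_linearSubst, mulVec_zero]

theorem jacobianAtZero_pullbackForm (M : Matrix σ σ R) (ω : σ → MvPolynomial σ R) :
    jacobianAtZero (pullbackForm M ω) = Mᵀ * jacobianAtZero ω * M := by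
  ext l k
  simp only [jacobianAtZero, pullbackForm, of_apply, map_sum, pderiv_C_mul, pderiv_linearSubst,
    map_mul, eval_C, eval_linearSubst, mulVec_zero, mul_apply, transpose_apply, Finset.mul_sum,
    Finset.sum_mul]
  rw [Finset.sum_comm]
  simp only [mul_assoc]

end LinearSubst

end MvPolynomial

theorem stmt_17_general {K : Type*} [Field K] [CharZero K] [IsAlgClosed K]
    (P Q μ F : MvPolynomial (Fin 2) K)
    (hP0 : eval 0 P = 0) (hQ0 : eval 0 Q = 0)
    (hμ : eval 0 μ ≠ 0)
    (hFx : pderiv 0 F = μ * P) (hFy : pderiv 1 F = μ * Q)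
    (hrank : IsUnit (Matrix.of fun i j : Fin 2 => eval 0 (pderiv i (pderiv j F))).det) :
    ∃ M : Matrix (Fin 2) (Fin 2) K, IsUnit M.det ∧
      ∃ P' Q' : MvPolynomial (Fin 2) K,
        P' = C (M 0 0) * aeval (fun i => ∑ j, C (M i j) * X j) P
           + C (M 1 0) * aeval (fun i => ∑ j, C (M i j) * X j) Q ∧
        Q' = C (M 0 1) * aeval (fun i => ∑ j, C (M i j) * X j) P
           + C (M 1 1) * aeval (fun i => ∑ j, C (M i j) * X j) Q ∧
        homogeneousComponent 0 P' = 0 ∧ homogeneousComponent 0 Q' = 0 ∧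
        homogeneousComponent 1 P' = X 0 ∧ homogeneousComponent 1 Q' = X 1 := by
  set ω : Fin 2 → MvPolynomial (Fin 2) K := ![P, Q]
  have hω0 : ∀ j, eval 0 (ω j) = 0 := Fin.forall_fin_two.2 ⟨hP0, hQ0⟩
  have hdF : (fun j => pderiv j F) = fun j => μ * ω j := funext (Fin.forall_fin_two.2 ⟨hFx, hFy⟩)
  have hJ : jacobianAtZero ω = (eval 0 μ)⁻¹ • jacobianAtZero fun j => pderiv j F := by
    rw [hdF, jacobianAtZero_mul hω0, inv_smul_smul₀ hμ]
  have hsymm : (jacobianAtZero ω).IsSymm := hJ ▸ (isSymm_jacobianAtZero_pderiv F).smul _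
  have hdet : (jacobianAtZero ω).det ≠ 0 := by
    rw [hJ, Matrix.det_smul, ← Matrix.det_transpose]
    exact mul_ne_zero (pow_ne_zero _ (inv_ne_zero hμ)) hrank.ne_zero
  obtain ⟨M, hMdet, hM⟩ := Matrix.exists_transpose_mul_mul_eq_one hsymm hdet
  have hpoincare : IsPoincareForm (pullbackForm M ω) :=
    isPoincareForm_of_jacobianAtZero_eq_one (fun l => by
      simp only [eval_zero_pullbackForm, hω0, mul_zero, Finset.sum_const_zero])
      (by rw [jacobianAtZero_pullbackForm, hM])
  obtain ⟨hP'0, hP'1⟩ := hpoincare 0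
  obtain ⟨hQ'0, hQ'1⟩ := hpoincare 1
  simp only [pullbackForm, Fin.sum_univ_two] at hP'0 hP'1 hQ'0 hQ'1
  exact ⟨M, hMdet, _, _, rfl, rfl, hP'0, hQ'0, hP'1, hQ'1⟩

/-- If `ω = P dx + Q dy` has a center at `0` over an algebraically closed field of
characteristic `0` (with first integral `F` satisfying `F(0) = 0`, `dF(0) = 0`) and the
associated quadric `F₂(ω,0)` has rank 2 (its Hessian at `0` is invertible), then there is
an invertible linear change of coordinates `M` (acting by substitution on `x, y` and on
`dx, dy`) transforming `ω` into a Poincaré differential form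
`(x + h.o.t.) dx + (y + h.o.t.) dy`. -/
theorem stmt_17 {K : Type*} [Field K] [CharZero K] [IsAlgClosed K]
    (P Q μ F : MvPolynomial (Fin 2) K)
    (hP0 : eval 0 P = 0) (hQ0 : eval 0 Q = 0)
    (hμ : eval 0 μ ≠ 0)
    (hFx : pderiv 0 F = μ * P) (hFy : pderiv 1 F = μ * Q)
    (hF0 : eval 0 F = 0)
    (hdF0 : eval 0 (pderiv 0 F) = 0 ∧ eval 0 (pderiv 1 F) = 0)
    (hrank : IsUnit (Matrix.of fun i j : Fin 2 => eval 0 (pderiv i (pderiv j F))).det) :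
    ∃ M : Matrix (Fin 2) (Fin 2) K, IsUnit M.det ∧
      ∃ P' Q' : MvPolynomial (Fin 2) K,
        P' = C (M 0 0) * aeval (fun i => ∑ j, C (M i j) * X j) P
           + C (M 1 0) * aeval (fun i => ∑ j, C (M i j) * X j) Q ∧
        Q' = C (M 0 1) * aeval (fun i => ∑ j, C (M i j) * X j) P
           + C (M 1 1) * aeval (fun i => ∑ j, C (M i j) * X j) Q ∧
        homogeneousComponent 0 P' = 0 ∧ homogeneousComponent 0 Q' = 0 ∧
        homogeneousComponent 1 P' = X 0 ∧ homogeneousComponent 1 Q' = X 1 :=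
  stmt_17_general P Q μ F hP0 hQ0 hμ hFx hFy hrank
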